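/- arXiv:0902.1731 — 3 statements merged into one kernel-verified Lean document; each statement's English description precedes it below -/
import Mathlib

section
/- For any integers r ≥ 2 and k ≥ 2 with (r,k) not equal to (2,2), (2,4), or (2,6), the sum P = Σ_{p | k, p prime} r^(k/p) over the distinct prime divisors p of k satisfies r^k ≥ (k+1)·P. -/
theorem aux_pow (n : ℕ) (h : 9 ≤ n) : (2*n+1)^2 ≤ 2^n := by
  induction n with
  | zero => omega
  | succ m ih =>
    rcases Nat.lt_or_ge m 9 with hm | hm
    · interval_cases m <;> omega
    · have h1 := ih hm
      have h2 : (2*(m+1)+1)^2 ≤ 2*(2*m+1)^2 := by nlinarith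
      calc (2*(m+1)+1)^2 ≤ 2*(2*m+1)^2 := h2
        _ ≤ 2 * 2^m := by omega
        _ = 2^(m+1) := (pow_succ' 2 m).symm

theorem pf_eq (k : ℕ) (hk : k ≠ 0) :
    k.primeFactors = (Finset.range (k+1)).filter (fun p => p.Prime ∧ p ∣ k) := by
  ext p
  simp only [Nat.mem_primeFactors, Finset.mem_filter, Finset.mem_range]
  constructor
  · rintro ⟨hp, hd, -⟩
    exact ⟨Nat.lt_succ_of_le (Nat.le_of_dvd (Nat.pos_of_ne_zero hk) hd), hp, hd⟩
  · rintro ⟨-, hp, hd⟩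
    exact ⟨hp, hd, hk⟩

theorem sum_prime_divisor_powers_le (r k : ℕ) (hr : 2 ≤ r) (hk : 2 ≤ k)
    (hexc : ¬ (r = 2 ∧ (k = 2 ∨ k = 4 ∨ k = 6))) :
    (k + 1) * ∑ p ∈ k.primeFactors, r ^ (k / p) ≤ r ^ k := by
  have hr1 : 1 ≤ r := by omega
  have hsum : ∑ p ∈ k.primeFactors, r ^ (k / p) ≤ k.primeFactors.card * r ^ (k/2) := by
    apply Finset.sum_le_card_nsmul
    intro p hp
    have hp2 : 2 ≤ p := (Nat.prime_of_mem_primeFactors hp).two_le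
    exact Nat.pow_le_pow_right hr1 (Nat.div_le_div_left hp2 (by omega))
  have hcard : (k+1) * k.primeFactors.card ≤ r ^ (k - k/2) := by
    by_cases hk6 : k = 2 ∨ k = 4 ∨ k = 6
    · have hr3 : 3 ≤ r := by
        rcases Nat.lt_or_ge r 3 with h | h
        · exfalso; exact hexc ⟨by omega, hk6⟩
        · exact h
      have h3 : (k+1) * k.primeFactors.card ≤ 3 ^ (k - k/2) := by
        rcases hk6 with h | h | h <;> subst h <;>
          rw [pf_eq _ (by norm_num)] <;> decide
      exact le_trans h3 (Nat.pow_le_pow_left hr3 _)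
    · have h2 : (k+1) * k.primeFactors.card ≤ 2 ^ (k - k/2) := by
        rcases Nat.lt_or_ge 16 k with h | h
        · have hc : k.primeFactors.card ≤ k + 1 := by
            calc k.primeFactors.card ≤ (Finset.range (k+1)).card := by
                  apply Finset.card_le_card
                  intro p hp
                  simp only [Finset.mem_range]
                  have := Nat.le_of_dvd (by omega) (Nat.dvd_of_mem_primeFactors hp)
                  omega
              _ = k + 1 := Finset.card_range _
          have hm9 : 9 ≤ k - k/2 := by omega
          calc (k+1) * k.primeFactors.card ≤ (k+1) * (k+1) :=
                Nat.mul_le_mul_left _ hc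
            _ ≤ (2*(k - k/2)+1)^2 := by
                have h' : k+1 ≤ 2*(k - k/2)+1 := by omega
                rw [pow_two]; exact Nat.mul_le_mul h' h'
            _ ≤ 2^(k - k/2) := aux_pow _ hm9
        · interval_cases k <;>
            first
              | (exfalso; exact hk6 (by omega))
              | (rw [pf_eq _ (by norm_num)]; decide)
      exact le_trans h2 (Nat.pow_le_pow_left hr _)
  calc (k+1) * ∑ p ∈ k.primeFactors, r ^ (k / p)
      ≤ (k+1) * (k.primeFactors.card * r ^ (k/2)) := Nat.mul_le_mul_left _ hsum
    _ = ((k+1) * k.primeFactors.card) * r ^ (k/2) := by ring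
    _ ≤ r ^ (k - k/2) * r ^ (k/2) := Nat.mul_le_mul_right _ hcard
    _ = r ^ k := by rw [← pow_add]; congr 1; omega
end

section
/- For all integers r ≥ 2 and k ≥ 2, except when r = 2 and k ∈ {2, 4, 6}, the Milnor number M_k^r = r·N_k^r − N_{k+1}^r is positive, where N_k^r = (1/k) Σ_{d | k} μ(d) r^(k/d); equivalently N_{k+1}^r < r·N_k^r. -/
open ArithmeticFunction ArithmeticFunction.Moebius

lemma notsq {n m : ℕ} (hm : 2 ≤ m) (h : m * m ∣ n) : ¬ Squarefree n := fun hs =>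
  absurd (Nat.isUnit_iff.mp (hs m h)) (by omega)
lemma mu1 : (μ 1 : ℤ) = 1 := moebius_apply_one
lemma mup {p : ℕ} (hp : p.Prime) : (μ p : ℤ) = -1 := moebius_apply_prime hp
lemma mu4 : (μ 4 : ℤ) = 0 := moebius_eq_zero_of_not_squarefree (notsq (le_refl 2) ⟨1, by norm_num⟩)
lemma mu8 : (μ 8 : ℤ) = 0 := moebius_eq_zero_of_not_squarefree (notsq (le_refl 2) ⟨2, by norm_num⟩)
lemma mu9 : (μ 9 : ℤ) = 0 := moebius_eq_zero_of_not_squarefree (notsq (m := 3) (by norm_num) ⟨1, by norm_num⟩)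
lemma mu6 : (μ 6 : ℤ) = 1 := by
  have := isMultiplicative_moebius.map_mul_of_coprime (m := 2) (n := 3) (by decide)
  rw [show (2*3 : ℕ) = 6 by norm_num] at this
  rw [this, mup (by norm_num), mup (by norm_num)]; ring
lemma mu10 : (μ 10 : ℤ) = 1 := by
  have := isMultiplicative_moebius.map_mul_of_coprime (m := 2) (n := 5) (by decide)
  rw [show (2*5 : ℕ) = 10 by norm_num] at this
  rw [this, mup (by norm_num), mup (by norm_num)]; ring

lemma mu2 : (μ 2 : ℤ) = -1 := mup (by norm_num)
lemma mu3 : (μ 3 : ℤ) = -1 := mup (by norm_num)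
lemma mu5 : (μ 5 : ℤ) = -1 := mup (by norm_num)
lemma mu7 : (μ 7 : ℤ) = -1 := mup (by norm_num)
lemma mu11 : (μ 11 : ℤ) = -1 := mup (by norm_num)

lemma d4 : (4:ℕ).divisors = {1,2,4} := by decide
lemma d6 : (6:ℕ).divisors = {1,2,3,6} := by decide
lemma d8 : (8:ℕ).divisors = {1,2,4,8} := by decide
lemma d9 : (9:ℕ).divisors = {1,3,9} := by decide
lemma d10 : (10:ℕ).divisors = {1,2,5,10} := by decide

lemma ev2 (r : ℤ) : ∑ d ∈ (2:ℕ).divisors, (μ d : ℤ) * r^(2/d) = r^2 - r := by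
  rw [show (2:ℕ).divisors = {1,2} from by decide]
  simp [mu1, mup (show Nat.Prime 2 by norm_num)]; ring
lemma ev3 (r : ℤ) : ∑ d ∈ (3:ℕ).divisors, (μ d : ℤ) * r^(3/d) = r^3 - r := by
  rw [show (3:ℕ).divisors = {1,3} from by decide]
  simp [mu1, mup (show Nat.Prime 3 by norm_num)]; ring
lemma ev4 (r : ℤ) : ∑ d ∈ (4:ℕ).divisors, (μ d : ℤ) * r^(4/d) = r^4 - r^2 := by
  rw [show (4:ℕ).divisors = {1,2,4} from by decide]
  simp [mu1, mu4, mup (show Nat.Prime 2 by norm_num)]; ring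
lemma ev5 (r : ℤ) : ∑ d ∈ (5:ℕ).divisors, (μ d : ℤ) * r^(5/d) = r^5 - r := by
  rw [show (5:ℕ).divisors = {1,5} from by decide]
  simp [mu1, mup (show Nat.Prime 5 by norm_num)]; ring
lemma ev6 (r : ℤ) : ∑ d ∈ (6:ℕ).divisors, (μ d : ℤ) * r^(6/d) = r^6 - r^3 - r^2 + r := by
  rw [show (6:ℕ).divisors = {1,2,3,6} from by decide]
  simp [mu1, mu6, mup (show Nat.Prime 2 by norm_num), mup (show Nat.Prime 3 by norm_num)]; ring
lemma ev7 (r : ℤ) : ∑ d ∈ (7:ℕ).divisors, (μ d : ℤ) * r^(7/d) = r^7 - r := by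
  rw [show (7:ℕ).divisors = {1,7} from by decide]
  simp [mu1, mup (show Nat.Prime 7 by norm_num)]; ring
lemma ev8 (r : ℤ) : ∑ d ∈ (8:ℕ).divisors, (μ d : ℤ) * r^(8/d) = r^8 - r^4 := by
  rw [show (8:ℕ).divisors = {1,2,4,8} from by decide]
  simp [mu1, mu4, mu8, mup (show Nat.Prime 2 by norm_num)]; ring
lemma ev9 (r : ℤ) : ∑ d ∈ (9:ℕ).divisors, (μ d : ℤ) * r^(9/d) = r^9 - r^3 := by
  rw [show (9:ℕ).divisors = {1,3,9} from by decide]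
  simp [mu1, mu9, mup (show Nat.Prime 3 by norm_num)]; ring
lemma ev10 (r : ℤ) : ∑ d ∈ (10:ℕ).divisors, (μ d : ℤ) * r^(10/d) = r^10 - r^5 - r^2 + r := by
  rw [show (10:ℕ).divisors = {1,2,5,10} from by decide]
  simp [mu1, mu10, mup (show Nat.Prime 2 by norm_num), mup (show Nat.Prime 5 by norm_num)]; ring
lemma ev11 (r : ℤ) : ∑ d ∈ (11:ℕ).divisors, (μ d : ℤ) * r^(11/d) = r^11 - r := by
  rw [show (11:ℕ).divisors = {1,11} from by decide]
  simp [mu1, mup (show Nat.Prime 11 by norm_num)]; ring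

lemma abs_mu_le (d : ℕ) : |(μ d : ℤ)| ≤ 1 := by
  by_cases h : Squarefree d
  · rw [moebius_apply_of_squarefree h, abs_pow, abs_neg, abs_one, one_pow]
  · rw [moebius_eq_zero_of_not_squarefree h]; simp

lemma geom (r : ℤ) (hr : 2 ≤ r) : ∀ m : ℕ, ∑ j ∈ Finset.Icc 1 m, r^j ≤ 2*r^m - 2 := by
  intro m
  induction m with
  | zero => simp
  | succ m ih =>
      rw [Finset.sum_Icc_succ_top (by omega)]
      have h1 : (0:ℤ) < r ^ m := by positivity
      have h2 : 2 * r^m ≤ r * r^m := by nlinarith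
      have : r ^ (m+1) = r * r ^ m := by ring
      nlinarith

lemma tail_bound (r : ℤ) (hr : 2 ≤ r) (n : ℕ) (hn : 2 ≤ n) :
    |∑ d ∈ n.divisors.erase 1, (μ d : ℤ) * r^(n/d)| ≤ 2*r^(n/2) - 2 := by
  have step1 : |∑ d ∈ n.divisors.erase 1, (μ d : ℤ) * r^(n/d)|
      ≤ ∑ d ∈ n.divisors.erase 1, r^(n/d) := by
    refine (Finset.abs_sum_le_sum_abs _ _).trans (Finset.sum_le_sum fun d hd => ?_)
    rw [abs_mul]
    have h1 : (0:ℤ) ≤ r ^ (n/d) := by positivity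
    have := abs_mu_le d
    calc |(μ d : ℤ)| * |r^(n/d)| ≤ 1 * |r^(n/d)| := by
            exact mul_le_mul_of_nonneg_right this (abs_nonneg _)
      _ = |r^(n/d)| := one_mul _
      _ = r^(n/d) := abs_of_nonneg h1
  have inj : ∀ d₁ ∈ n.divisors.erase 1, ∀ d₂ ∈ n.divisors.erase 1,
      n / d₁ = n / d₂ → d₁ = d₂ := by
    intro d₁ h₁ d₂ h₂ h
    have h₁' := Nat.mem_divisors.mp (Finset.mem_of_mem_erase h₁)
    have h₂' := Nat.mem_divisors.mp (Finset.mem_of_mem_erase h₂)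
    have e1 : n / (n / d₁) = d₁ := Nat.div_div_self h₁'.1 h₁'.2
    have e2 : n / (n / d₂) = d₂ := Nat.div_div_self h₂'.1 h₂'.2
    rw [← e1, ← e2, h]
  have step2 : ∑ d ∈ n.divisors.erase 1, r^(n/d) ≤ ∑ j ∈ Finset.Icc 1 (n/2), r^j := by
    rw [← Finset.sum_image inj]
    apply Finset.sum_le_sum_of_subset_of_nonneg
    · intro j hj
      rw [Finset.mem_image] at hj
      obtain ⟨d, hd, rfl⟩ := hj
      have hne : d ≠ 1 := Finset.ne_of_mem_erase hd
      have hd' := Nat.mem_divisors.mp (Finset.mem_of_mem_erase hd)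
      have hdpos : 0 < d := Nat.pos_of_dvd_of_pos hd'.1 (by omega)
      have hd2 : 2 ≤ d := by omega
      have hle : d ≤ n := Nat.le_of_dvd (by omega) hd'.1
      rw [Finset.mem_Icc]
      constructor
      · exact Nat.one_le_div_iff hdpos |>.mpr hle
      · exact Nat.div_le_div_left hd2 (by omega)
    · intro j _ _; positivity
  calc |∑ d ∈ n.divisors.erase 1, (μ d : ℤ) * r^(n/d)|
      ≤ ∑ d ∈ n.divisors.erase 1, r^(n/d) := step1
    _ ≤ ∑ j ∈ Finset.Icc 1 (n/2), r^j := step2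
    _ ≤ 2*r^(n/2) - 2 := geom r hr (n/2)

lemma split (n : ℕ) (hn : 1 ≤ n) (r : ℤ) :
    ∑ d ∈ n.divisors, (μ d:ℤ) * r^(n/d)
      = r^n + ∑ d ∈ n.divisors.erase 1, (μ d:ℤ)*r^(n/d) := by
  rw [← Finset.add_sum_erase _ _ (Nat.one_mem_divisors.mpr (by omega))]
  simp

lemma main_bound (r k : ℕ) (hr : 2 ≤ r) (hk : 2 ≤ k)
    (hpow : (4*(k:ℤ)+2) * (r:ℤ)^(k/2+1) ≤ (r:ℤ)^(k+1)) :
    (k : ℤ) * ∑ d ∈ (k + 1).divisors, (μ d : ℤ) * (r : ℤ) ^ ((k + 1) / d)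
      < (r : ℤ) * (k + 1 : ℤ) * ∑ d ∈ k.divisors, (μ d : ℤ) * (r : ℤ) ^ (k / d) := by
  have hR : (2:ℤ) ≤ (r:ℤ) := by exact_mod_cast hr
  have hK : (2:ℤ) ≤ (k:ℤ) := by exact_mod_cast hk
  rw [split (k+1) (by omega), split k (by omega)]
  set S1 := ∑ d ∈ (k+1).divisors.erase 1, (μ d : ℤ) * (r:ℤ)^((k+1)/d) with hS1
  set S2 := ∑ d ∈ k.divisors.erase 1, (μ d : ℤ) * (r:ℤ)^(k/d) with hS2
  have b1 := tail_bound (r:ℤ) hR (k+1) (by omega)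
  have b2 := tail_bound (r:ℤ) hR k hk
  have he : (k+1)/2 ≤ k/2 + 1 := by omega
  have hmon : (r:ℤ)^((k+1)/2) ≤ (r:ℤ)^(k/2+1) := pow_le_pow_right₀ (by omega) he
  have b1' : |S1| ≤ 2*(r:ℤ)^(k/2+1) - 2 := by
    refine b1.trans ?_; linarith
  rw [abs_le] at b1' b2
  have e1 : (r:ℤ)^(k+1) = (r:ℤ)^k * (r:ℤ) := pow_succ _ _
  have e2 : (r:ℤ)^(k/2+1) = (r:ℤ)^(k/2) * (r:ℤ) := pow_succ _ _
  have hknn : (0:ℤ) ≤ (k:ℤ) := by positivity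
  have A1 : (k:ℤ) * S1 ≤ (k:ℤ) * (2*(r:ℤ)^(k/2+1) - 2) :=
    mul_le_mul_of_nonneg_left b1'.2 hknn
  have A2 : -(((k:ℤ)+1) * (r:ℤ) * S2) ≤ ((k:ℤ)+1) * (r:ℤ) * (2*(r:ℤ)^(k/2) - 2) := by
    have h0 : (0:ℤ) ≤ ((k:ℤ)+1) * (r:ℤ) := by positivity
    have := mul_le_mul_of_nonneg_left b2.1 h0
    linarith [this]
  nlinarith [A1, A2, hpow, e1, e2]

lemma pow_ge3 (m : ℕ) (hm : 3 ≤ m) : 8*m + 2 ≤ 3^m := by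
  induction m with
  | zero => omega
  | succ m ih =>
      rcases Nat.lt_or_ge m 3 with h | h
      · interval_cases m <;> first | omega | norm_num
      · have := ih h
        have : 3^(m+1) = 3 * 3^m := by ring
        omega

lemma pow_ge2 (m : ℕ) (hm : 6 ≤ m) : 8*m + 2 ≤ 2^m := by
  induction m with
  | zero => omega
  | succ m ih =>
      rcases Nat.lt_or_ge m 6 with h | h
      · interval_cases m <;> first | omega | norm_num
      · have := ih h
        have : 2^(m+1) = 2 * 2^m := by ring
        omega

lemma hpow_of (r k : ℕ) (hr : 2 ≤ r) (h : 4*k + 2 ≤ r^(k - k/2)) :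
    (4*(k:ℤ)+2) * (r:ℤ)^(k/2+1) ≤ (r:ℤ)^(k+1) := by
  have hsplit : k + 1 = (k/2 + 1) + (k - k/2) := by omega
  have e : (r:ℤ)^(k+1) = (r:ℤ)^(k/2+1) * (r:ℤ)^(k - k/2) := by
    rw [hsplit, pow_add]
  rw [e]
  have h' : (4*(k:ℤ)+2) ≤ (r:ℤ)^(k - k/2) := by exact_mod_cast h
  have hp : (0:ℤ) ≤ (r:ℤ)^(k/2+1) := by positivity
  calc (4*(k:ℤ)+2) * (r:ℤ)^(k/2+1) ≤ (r:ℤ)^(k - k/2) * (r:ℤ)^(k/2+1) :=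
        mul_le_mul_of_nonneg_right h' hp
    _ = (r:ℤ)^(k/2+1) * (r:ℤ)^(k - k/2) := by ring

open ArithmeticFunction ArithmeticFunction.Moebius in
theorem milnor_number_pos (r k : ℕ) (hr : 2 ≤ r) (hk : 2 ≤ k)
    (hexc : ¬ (r = 2 ∧ (k = 2 ∨ k = 4 ∨ k = 6))) :
    (k : ℤ) * ∑ d ∈ (k + 1).divisors, (μ d : ℤ) * (r : ℤ) ^ ((k + 1) / d)
      < (r : ℤ) * (k + 1 : ℤ) * ∑ d ∈ k.divisors, (μ d : ℤ) * (r : ℤ) ^ (k / d) := by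
  have hR : (2:ℤ) ≤ (r:ℤ) := by exact_mod_cast hr
  rcases Nat.lt_or_ge k 11 with hk11 | hk11
  · rcases Nat.lt_or_ge r 3 with hr3 | hr3
    · -- r = 2
      have hr2 : r = 2 := by omega
      subst hr2
      have hkne : k ≠ 2 ∧ k ≠ 4 ∧ k ≠ 6 := by
        constructor
        · intro h; exact hexc ⟨rfl, Or.inl h⟩
        constructor
        · intro h; exact hexc ⟨rfl, Or.inr (Or.inl h)⟩
        · intro h; exact hexc ⟨rfl, Or.inr (Or.inr h)⟩
      obtain ⟨h2, h4, h6⟩ := hkne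
      interval_cases k <;>
        first
          | omega
          | norm_num [d4, d6, d8, d9, d10, mu1, mu2, mu3, mu4, mu5, mu6, mu7,
              mu8, mu9, mu10, mu11]
    · -- r ≥ 3
      have hR3 : (3:ℤ) ≤ (r:ℤ) := by exact_mod_cast hr3
      rcases Nat.lt_or_ge k 5 with hk5 | hk5
      · interval_cases k
        · -- k = 2
          norm_num [mu1, mu2, mu3]
          nlinarith [mul_pos (mul_pos (show (0:ℤ) < (r:ℤ) by linarith)
            (show (0:ℤ) < (r:ℤ) - 1 by linarith)) (show (0:ℤ) < (r:ℤ) - 2 by linarith)]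
        · -- k = 3
          norm_num [d4, mu1, mu2, mu3, mu4]
          nlinarith [sq_nonneg ((r:ℤ)), sq_nonneg ((r:ℤ)^2 - 1),
            mul_pos (mul_pos (show (0:ℤ) < (r:ℤ)*(r:ℤ) by nlinarith)
              (show (0:ℤ) < (r:ℤ) - 1 by linarith)) (show (0:ℤ) < (r:ℤ) + 1 by linarith)]
        · -- k = 4
          norm_num [d4, mu1, mu2, mu4, mu5]
          nlinarith [mul_pos (mul_pos (mul_pos (mul_pos
            (show (0:ℤ) < (r:ℤ) by linarith) (show (0:ℤ) < (r:ℤ) - 1 by linarith))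
            (show (0:ℤ) < (r:ℤ) + 1 by linarith)) (show (0:ℤ) < (r:ℤ) - 2 by linarith))
            (show (0:ℤ) < (r:ℤ) + 2 by linarith)]
      · apply main_bound r k hr hk
        apply hpow_of r k hr
        have hm3 : 3 ≤ k - k/2 := by omega
        have h1 : 4*k + 2 ≤ 8*(k - k/2) + 2 := by omega
        calc 4*k + 2 ≤ 8*(k - k/2) + 2 := h1
          _ ≤ 3^(k - k/2) := pow_ge3 _ hm3
          _ ≤ r^(k - k/2) := Nat.pow_le_pow_left hr3 _
  · apply main_bound r k hr hk
    apply hpow_of r k hr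
    have hm6 : 6 ≤ k - k/2 := by omega
    have h1 : 4*k + 2 ≤ 8*(k - k/2) + 2 := by omega
    calc 4*k + 2 ≤ 8*(k - k/2) + 2 := h1
      _ ≤ 2^(k - k/2) := pow_ge2 _ hm6
      _ ≤ r^(k - k/2) := Nat.pow_le_pow_left hr _
end

section
/- For any integers r ≥ 2 and k ≥ 2, if 0 ≤ s < ω(k) (where ω(k) is the number of distinct prime factors of k) and n_s denotes the sum of r^(k/d) over squarefree divisors d of k with exactly s prime factors, then n_s > n_{s+1}; in particular the sequence n_0, n_1, …, n_{ω(k)} is strictly decreasing and positive. -/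
/-- `n_s`: the sum of `r^(k/d)` over squarefree divisors `d` of `k` with exactly
`s` distinct prime factors. -/
def nSum (r k s : ℕ) : ℕ :=
  ∑ d ∈ k.divisors.filter (fun d => Squarefree d ∧ d.primeFactors.card = s), r ^ (k / d)

lemma squarefree_prod_primes (T : Finset ℕ) (hT : ∀ p ∈ T, p.Prime) :
    Squarefree (∏ p ∈ T, p) := by
  classical
  induction T using Finset.induction_on with
  | empty => simpa using squarefree_one
  | @insert p T hpT ih =>
    rw [Finset.prod_insert hpT, Nat.squarefree_mul_iff]
    have hp : p.Prime := hT p (Finset.mem_insert_self _ _)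
    have hT' : ∀ q ∈ T, q.Prime := fun q hq => hT q (Finset.mem_insert_of_mem hq)
    refine ⟨(Nat.Prime.coprime_iff_not_dvd hp).mpr ?_, hp.squarefree, ih hT'⟩
    intro hdvd
    obtain ⟨q, hq, hpq⟩ := (Nat.Prime.prime hp).dvd_finset_prod_iff _ |>.mp hdvd
    exact hpT (((hT' q hq).dvd_iff_eq hp.ne_one).mp hpq ▸ hq)

lemma myGeomLt {r : ℕ} (hr : 2 ≤ r) (N : ℕ) :
    ∑ j ∈ Finset.Icc 1 N, r ^ j < r ^ (N + 1) := by
  induction N with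
  | zero => simpa using (Nat.pow_pos (by omega) : 0 < r ^ 1)
  | succ n ih =>
    rw [Finset.sum_Icc_succ_top (by omega)]
    have h2 : r ^ (n + 1) + r ^ (n + 1) ≤ r ^ (n + 1 + 1) := by
      have := Nat.mul_le_mul hr (le_refl (r ^ (n + 1)))
      rw [show n+1+1 = (n+1)+1 from rfl, pow_succ r (n + 1), mul_comm]
      omega
    omega

/-- Nonemptiness: for `s ≤ ω k` there is a squarefree divisor with `s` prime factors. -/
lemma exists_sq_div (k s : ℕ) (hk : k ≠ 0) (hs : s ≤ k.primeFactors.card) :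
    ∃ d ∈ k.divisors.filter (fun d => Squarefree d ∧ d.primeFactors.card = s), True := by
  obtain ⟨T, hTsub, hTcard⟩ := Finset.exists_subset_card_eq hs
  have hT : ∀ p ∈ T, p.Prime := fun p hp => Nat.prime_of_mem_primeFactors (hTsub hp)
  refine ⟨∏ p ∈ T, p, ?_, trivial⟩
  rw [Finset.mem_filter, Nat.mem_divisors]
  refine ⟨⟨Finset.prod_primes_dvd k (fun p hp => (hT p hp).prime)
    (fun p hp => Nat.dvd_of_mem_primeFactors (hTsub hp)), hk⟩,
    squarefree_prod_primes T hT, by rw [Nat.primeFactors_prod hT, hTcard]⟩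

theorem nSum_strict_anti (r k : ℕ) (hr : 2 ≤ r) (hk : 2 ≤ k) :
    (∀ s : ℕ, s < k.primeFactors.card → nSum r k (s + 1) < nSum r k s) ∧
    (∀ s : ℕ, s ≤ k.primeFactors.card → 0 < nSum r k s) := by
  classical
  have hk0 : k ≠ 0 := by omega
  have hpos : ∀ s : ℕ, s ≤ k.primeFactors.card → 0 < nSum r k s := by
    intro s hs
    obtain ⟨d, hd, -⟩ := exists_sq_div k s hk0 hs
    exact Finset.sum_pos' (fun i _ => Nat.zero_le _)
      ⟨d, hd, Nat.pow_pos (by omega)⟩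
  refine ⟨fun s hs => ?_, hpos⟩
  set S1 := k.divisors.filter (fun d => Squarefree d ∧ d.primeFactors.card = s + 1) with hS1
  set S0 := k.divisors.filter (fun d => Squarefree d ∧ d.primeFactors.card = s) with hS0
  -- the map removing the largest prime factor
  set f : ℕ → ℕ := fun d => d / (d.primeFactors.sup id) with hf
  -- basic facts about elements of S1
  have key : ∀ d ∈ S1, ∃ p : ℕ, p.Prime ∧ p ∣ d ∧ f d = d / p ∧ d = p * (d / p) ∧
      (d / p) ∈ S0 := by
    intro d hd
    rw [hS1, Finset.mem_filter, Nat.mem_divisors] at hd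
    obtain ⟨⟨hdk, -⟩, hsq, hcard⟩ := hd
    have hne : d.primeFactors.Nonempty := Finset.card_pos.mp (by omega)
    set p := d.primeFactors.sup id with hp
    have hpmem : p ∈ d.primeFactors := by
      have := d.primeFactors.max'_mem hne
      rwa [Finset.max'_eq_sup', Finset.sup'_eq_sup hne id] at this
    have hpprime : p.Prime := Nat.prime_of_mem_primeFactors hpmem
    have hpd : p ∣ d := Nat.dvd_of_mem_primeFactors hpmem
    have hd0 : d ≠ 0 := hsq.ne_zero
    have hde : d = p * (d / p) := (Nat.mul_div_cancel' hpd).symm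
    have hedvd : d / p ∣ d := Nat.div_dvd_of_dvd hpd
    have he0 : d / p ≠ 0 := by
      intro h; rw [h, mul_zero] at hde; exact hd0 hde
    have hpe : ¬ p ∣ d / p := by
      intro h
      exact hpprime.not_isUnit (hsq p (hde ▸ mul_dvd_mul_left p h))
    have hef : (d / p).primeFactors = d.primeFactors.erase p := by
      conv_rhs => rw [hde]
      rw [Nat.primeFactors_mul hpprime.ne_zero he0, hpprime.primeFactors,
        Finset.erase_union_distrib, Finset.erase_singleton, Finset.empty_union,
        Finset.erase_eq_of_notMem (by
          simp only [Nat.mem_primeFactors]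
          tauto)]
    refine ⟨p, hpprime, hpd, rfl, hde, ?_⟩
    rw [hS0, Finset.mem_filter, Nat.mem_divisors]
    refine ⟨⟨hedvd.trans hdk, hk0⟩, hsq.squarefree_of_dvd hedvd, ?_⟩
    rw [hef, Finset.card_erase_of_mem hpmem, hcard]
    omega
  have hmaps : ∀ d ∈ S1, f d ∈ S0 := by
    intro d hd
    obtain ⟨p, -, -, hfd, -, hmem⟩ := key d hd
    rw [hfd]; exact hmem
  have hsplit : nSum r k (s + 1) = ∑ e ∈ S0, ∑ d ∈ S1.filter (fun d => f d = e), r ^ (k / d) :=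
    (Finset.sum_fiberwise_of_maps_to hmaps _).symm
  have hfiber : ∀ e ∈ S0, ∑ d ∈ S1.filter (fun d => f d = e), r ^ (k / d) < r ^ (k / e) := by
    intro e he
    have he' := he
    rw [hS0, Finset.mem_filter, Nat.mem_divisors] at he'
    obtain ⟨⟨hek, -⟩, hesq, -⟩ := he'
    set m := k / e with hm
    have hm1 : 1 ≤ m := Nat.one_le_div_iff (Nat.pos_of_ne_zero hesq.ne_zero) |>.mpr
      (Nat.le_of_dvd (by omega) hek)
    -- each d in fiber has k/d ∈ Icc 1 (m/2), and d ↦ k/d is injective on divisors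
    have hsub : ∀ d ∈ S1.filter (fun d => f d = e), k / d ∈ Finset.Icc 1 (m / 2) := by
      intro d hd
      rw [Finset.mem_filter] at hd
      obtain ⟨hd1, hfd⟩ := hd
      obtain ⟨p, hpprime, hpd, hfd', hde, -⟩ := key d hd1
      rw [hfd'] at hfd
      have hdk : d ∣ k := (Nat.mem_divisors.mp (Finset.mem_filter.mp hd1).1).1
      have hd0 : 0 < d := Nat.pos_of_mem_divisors (Finset.mem_filter.mp hd1).1
      have hde' : d = p * e := by rw [hde, hfd]
      have hkd : k / d = m / p := by
        rw [hde', hm, Nat.div_div_eq_div_mul, mul_comm]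
      rw [Finset.mem_Icc, hkd]
      constructor
      · have hdk' : p * e ∣ k := hde' ▸ hdk
        have : p ∣ m := by
          rw [hm]
          rw [mul_comm] at hdk'
          exact (Nat.dvd_div_iff_mul_dvd hek).mpr hdk'
        exact Nat.one_le_div_iff hpprime.pos |>.mpr (Nat.le_of_dvd (by omega) this)
      · exact Nat.div_le_div_left hpprime.two_le (by omega)
    have hinj : ∀ a ∈ S1.filter (fun d => f d = e), ∀ b ∈ S1.filter (fun d => f d = e),
        k / a = k / b → a = b := by
      intro a ha b hb hab
      have hak : a ∣ k := (Nat.mem_divisors.mp (Finset.mem_filter.mp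
        (Finset.mem_filter.mp ha).1).1).1
      have hbk : b ∣ k := (Nat.mem_divisors.mp (Finset.mem_filter.mp
        (Finset.mem_filter.mp hb).1).1).1
      have ha0 : 0 < a := Nat.pos_of_mem_divisors (Finset.mem_filter.mp
        (Finset.mem_filter.mp ha).1).1
      have hb0 : 0 < b := Nat.pos_of_mem_divisors (Finset.mem_filter.mp
        (Finset.mem_filter.mp hb).1).1
      have h1 : k / (k / a) = a := Nat.div_div_self hak hk0
      have h2 : k / (k / b) = b := Nat.div_div_self hbk hk0
      rw [← h1, ← h2, hab]
    calc ∑ d ∈ S1.filter (fun d => f d = e), r ^ (k / d)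
        = ∑ j ∈ (S1.filter (fun d => f d = e)).image (fun d => k / d), r ^ j := by
          rw [Finset.sum_image hinj]
      _ ≤ ∑ j ∈ Finset.Icc 1 (m / 2), r ^ j := by
          apply Finset.sum_le_sum_of_subset
          intro j hj
          rw [Finset.mem_image] at hj
          obtain ⟨d, hd, rfl⟩ := hj
          exact hsub d hd
      _ < r ^ (m / 2 + 1) := myGeomLt hr _
      _ ≤ r ^ m := Nat.pow_le_pow_right (by omega) (by omega)
  have hne0 : S0.Nonempty := by
    obtain ⟨d, hd, -⟩ := exists_sq_div k s hk0 (by omega)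
    exact ⟨d, hd⟩
  calc nSum r k (s + 1) = ∑ e ∈ S0, ∑ d ∈ S1.filter (fun d => f d = e), r ^ (k / d) := hsplit
    _ < ∑ e ∈ S0, r ^ (k / e) := Finset.sum_lt_sum_of_nonempty hne0 hfiber
    _ = nSum r k s := rfl
end
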